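/- Let σ0 ∈ ℕ and let (λ^{(σ)}_n)_{n∈ℕ}, σ = 1,…,σ0, be finitely many sequences of positive integers. Then there exists a permutation π of {1,…,σ0} such that the rearranged sequences (λ^{(π(σ))}_n), σ = 1,…,σ0, are well ordered, i.e. limsup_n λ^{(π(σ+1))}_n/λ^{(π(σ))}_n ≥ limsup_n λ^{(π(σ))}_n/λ^{(π(σ+1))}_n for every σ = 1,…,σ0−1. -/

import Mathlib

open Filter Topology
open scoped ENNReal

/-!
Comparing the two limits superior defines a total relation on the index set, and the
theorem asks for a Hamiltonian path of that relation (Rédei's theorem on tournaments).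
Insertion sort produces one: it needs only totality, not transitivity, to make every
pair of adjacent entries related.
-/

namespace List

variable {α : Type*} {r : α → α → Prop} [DecidableRel r]

theorem isChain_orderedInsert_and_head?_mem (htot : ∀ a b, r a b ∨ r b a) (a : α) :
    ∀ l : List α, l.IsChain r →
      (l.orderedInsert r a).IsChain r ∧ ∀ y ∈ (l.orderedInsert r a).head?, y = a ∨ y ∈ l.head?
  | [], _ => by simp
  | b :: t, hchain => by
    by_cases hab : r a b
    · simp [orderedInsert_cons_of_le _ _ hab, hab, hchain]
    · obtain ⟨hb, ht⟩ := isChain_cons.mp hchain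
      obtain ⟨hins, hhead⟩ := isChain_orderedInsert_and_head?_mem htot a t ht
      have hba : r b a := (htot a b).resolve_left hab
      rw [orderedInsert_of_not_le _ _ hab]
      refine ⟨isChain_cons.mpr ⟨fun y hy => ?_, hins⟩, by simp⟩
      rcases hhead y hy with rfl | hy
      · exact hba
      · exact hb y hy

theorem IsChain.orderedInsert (htot : ∀ a b, r a b ∨ r b a) (a : α) {l : List α}
    (hl : l.IsChain r) : (l.orderedInsert r a).IsChain r :=
  (isChain_orderedInsert_and_head?_mem htot a l hl).1

theorem isChain_insertionSort (htot : ∀ a b, r a b ∨ r b a) :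
    ∀ l : List α, (l.insertionSort r).IsChain r
  | [] => isChain_nil
  | a :: l => (isChain_insertionSort htot l).orderedInsert htot a

end List

theorem Fin.exists_perm_rel_succ_of_total {n : ℕ} (r : Fin n → Fin n → Prop)
    (htot : ∀ a b, r a b ∨ r b a) :
    ∃ π : Equiv.Perm (Fin n), ∀ (i : ℕ) (h : i + 1 < n),
      r (π ⟨i, Nat.lt_of_succ_lt h⟩) (π ⟨i + 1, h⟩) := by
  classical
  let l := (List.finRange n).insertionSort r
  have hperm : l.Perm (List.finRange n) := List.perm_insertionSort r _
  have hlen : l.length = n := by rw [hperm.length_eq, List.length_finRange]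
  have hnodup : l.Nodup := hperm.nodup_iff.mpr (List.nodup_finRange n)
  have hmem : ∀ x, x ∈ l := fun x => hperm.mem_iff.mpr (List.mem_finRange x)
  refine ⟨(finCongr hlen.symm).trans (hnodup.getEquivOfForallMemList l hmem), fun i h => ?_⟩
  exact List.isChain_iff_getElem.mp (List.isChain_insertionSort htot _) i (by simpa using h)

theorem stmt0_general (σ0 : ℕ) (Λ : Fin σ0 → ℕ → ℕ) :
    ∃ π : Equiv.Perm (Fin σ0),
      ∀ (i : ℕ) (h : i + 1 < σ0),
        limsup
            (fun n => ((Λ (π ⟨i, Nat.lt_of_succ_lt h⟩) n : ℝ≥0∞) /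
              (Λ (π ⟨i + 1, h⟩) n : ℝ≥0∞))) atTop ≤
          limsup
            (fun n => ((Λ (π ⟨i + 1, h⟩) n : ℝ≥0∞) /
              (Λ (π ⟨i, Nat.lt_of_succ_lt h⟩) n : ℝ≥0∞))) atTop :=
  Fin.exists_perm_rel_succ_of_total
    (fun a b => limsup (fun n => (Λ a n : ℝ≥0∞) / Λ b n) atTop ≤
      limsup (fun n => (Λ b n : ℝ≥0∞) / Λ a n) atTop)
    fun _ _ => le_total _ _

/-- Any finite family of sequences of positive integers admits a
rearrangement (given by a permutation `π` of the index set) which is well ordered,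
i.e. `limsup λ^{(π(σ+1))}_n / λ^{(π(σ))}_n ≥ limsup λ^{(π(σ))}_n / λ^{(π(σ+1))}_n`
for every consecutive pair of indices (limits superior taken in `[0,∞]`). -/
theorem stmt0 (σ0 : ℕ) (Λ : Fin σ0 → ℕ → ℕ) (hpos : ∀ σ n, 0 < Λ σ n) :
    ∃ π : Equiv.Perm (Fin σ0),
      ∀ (i : ℕ) (h : i + 1 < σ0),
        limsup
            (fun n => ((Λ (π ⟨i, Nat.lt_of_succ_lt h⟩) n : ℝ≥0∞) /
              (Λ (π ⟨i + 1, h⟩) n : ℝ≥0∞))) atTop ≤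
          limsup
            (fun n => ((Λ (π ⟨i + 1, h⟩) n : ℝ≥0∞) /
              (Λ (π ⟨i, Nat.lt_of_succ_lt h⟩) n : ℝ≥0∞))) atTop :=
  stmt0_general σ0 Λ
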